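/- Let μ ∈ ℝ, σ > 0, let f be the truncated Gaussian density with parameters μ, σ, let t_algo > 0, and let g(γ) = sup over ξ ∈ [0,1] of (H₂((1-γ)ξ) - H₂(γξ)). Then the ergodic quantum capacity of the fast time-varying amplitude damping channel, ∫₀^∞ g(1 - exp(-t_algo/x)) · f(x) dx, is strictly positive. In particular this holds even when the mean damping probability 1 - exp(-t_algo/μ) exceeds 1/2, so the ergodic capacity can be positive although the static amplitude damping channel at the mean relaxation time has zero quantum capacity. -/
import Mathlib


open MeasureTheory

/-- The binary entropy `H₂(x) = -x·log₂ x - (1-x)·log₂(1-x)` (with the conventions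
`H₂(0) = H₂(1) = 0`, automatic since `Real.logb 2 0 = 0`). -/
noncomputable def binEnt (x : ℝ) : ℝ :=
  -(x * Real.logb 2 x) - (1 - x) * Real.logb 2 (1 - x)

/-- The amplitude damping capacity function
`g(γ) = sup_{ξ ∈ [0,1]} (H₂((1-γ)ξ) - H₂(γξ))`. -/
noncomputable def adCap (γ : ℝ) : ℝ :=
  ⨆ ξ : Set.Icc (0 : ℝ) 1, (binEnt ((1 - γ) * ↑ξ) - binEnt (γ * ↑ξ))

/-- The Gaussian Q-function `Q(x) = (1/√(2π)) ∫ₓ^∞ e^{-u²/2} du`. -/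
noncomputable def gaussQ (x : ℝ) : ℝ :=
  (1 / Real.sqrt (2 * Real.pi)) * ∫ u in Set.Ioi x, Real.exp (-u ^ 2 / 2)

/-- The truncated Gaussian density on `[0,∞)` with parameters `μ, σ`, modeling the relaxation
time `T₁` of a superconducting qubit. -/
noncomputable def truncGaussPDF (μ σ : ℝ) (t : ℝ) : ℝ :=
  if 0 ≤ t then
    (1 / (σ * Real.sqrt (2 * Real.pi))) * Real.exp (-(t - μ) ^ 2 / (2 * σ ^ 2))
      / (1 - gaussQ (μ / σ))
  else 0

lemma binEnt_eq (x : ℝ) : binEnt x = Real.binEntropy x / Real.log 2 := by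
  simp only [binEnt, Real.binEntropy, Real.logb, Real.log_inv]
  ring

lemma binEnt_continuous : Continuous binEnt := by
  have h : binEnt = fun x => Real.binEntropy x / Real.log 2 := funext binEnt_eq
  rw [h]; exact Real.binEntropy_continuous.div_const _

lemma binEnt_le_one (x : ℝ) : binEnt x ≤ 1 := by
  rw [binEnt_eq, div_le_one (Real.log_pos one_lt_two)]
  exact Real.binEntropy_le_log_two

lemma binEnt_nonneg {x : ℝ} (h0 : 0 ≤ x) (h1 : x ≤ 1) : 0 ≤ binEnt x := by
  rw [binEnt_eq]
  exact div_nonneg (Real.binEntropy_nonneg h0 h1) (Real.log_nonneg one_le_two)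

noncomputable def adD (γ ξ : ℝ) : ℝ := binEnt ((1 - γ) * ξ) - binEnt (γ * ξ)

lemma adD_le_one {γ ξ : ℝ} (hγ0 : 0 ≤ γ) (hγ1 : γ ≤ 1) (hξ0 : 0 ≤ ξ) (hξ1 : ξ ≤ 1) :
    adD γ ξ ≤ 1 := by
  have h2 : 0 ≤ binEnt (γ * ξ) :=
    binEnt_nonneg (mul_nonneg hγ0 hξ0) (by nlinarith)
  have h1 := binEnt_le_one ((1 - γ) * ξ)
  unfold adD; linarith

lemma adD_zero (γ : ℝ) : adD γ 0 = 0 := by simp [adD, binEnt]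

lemma adD_cont (γ : ℝ) : Continuous (adD γ) :=
  (binEnt_continuous.comp (continuous_const.mul continuous_id)).sub
    (binEnt_continuous.comp (continuous_const.mul continuous_id))

lemma adD_cont' (ξ : ℝ) : Continuous (fun γ => adD γ ξ) :=
  (binEnt_continuous.comp ((continuous_const.sub continuous_id).mul continuous_const)).sub
    (binEnt_continuous.comp (continuous_id.mul continuous_const))

lemma adD_pos {γ : ℝ} (h0 : 0 < γ) (h1 : γ < 1/2) : 0 < adD γ (1/2) := by
  have hmem1 : γ * (1/2) ∈ Set.Icc (0:ℝ) 2⁻¹ := by constructor <;> nlinarith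
  have hmem2 : (1 - γ) * (1/2) ∈ Set.Icc (0:ℝ) 2⁻¹ := by constructor <;> nlinarith
  have hlt : γ * (1/2) < (1 - γ) * (1/2) := by nlinarith
  have key := Real.binEntropy_strictMonoOn hmem1 hmem2 hlt
  unfold adD
  rw [binEnt_eq, binEnt_eq, sub_pos]
  gcongr


lemma adCap_eq (γ : ℝ) : adCap γ = ⨆ ξ : Set.Icc (0:ℝ) 1, adD γ ↑ξ := rfl

lemma adCap_bdd {γ : ℝ} (hγ0 : 0 ≤ γ) (hγ1 : γ ≤ 1) :
    BddAbove (Set.range fun ξ : Set.Icc (0:ℝ) 1 => adD γ ↑ξ) := by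
  refine ⟨1, ?_⟩
  rintro _ ⟨ξ, rfl⟩
  exact adD_le_one hγ0 hγ1 ξ.2.1 ξ.2.2

lemma adCap_nonneg {γ : ℝ} (hγ0 : 0 ≤ γ) (hγ1 : γ ≤ 1) : 0 ≤ adCap γ := by
  rw [adCap_eq]
  have := le_ciSup (adCap_bdd hγ0 hγ1) ⟨0, by norm_num⟩
  simpa [adD_zero] using this

lemma adCap_pos {γ : ℝ} (h0 : 0 < γ) (h1 : γ < 1/2) : 0 < adCap γ := by
  rw [adCap_eq]
  have h2 := le_ciSup (adCap_bdd h0.le (by linarith)) ⟨1/2, by norm_num⟩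
  calc (0:ℝ) < adD γ (1/2) := adD_pos h0 h1
    _ ≤ _ := h2

abbrev QI := {q : ℚ // 0 ≤ (q:ℝ) ∧ (q:ℝ) ≤ 1}

noncomputable def ratSup (γ : ℝ) : ℝ := ⨆ q : QI, adD γ (q : ℝ)

lemma ratSup_bdd {γ : ℝ} (hγ0 : 0 ≤ γ) (hγ1 : γ ≤ 1) :
    BddAbove (Set.range fun q : QI => adD γ (q : ℝ)) := by
  refine ⟨1, ?_⟩
  rintro _ ⟨q, rfl⟩
  exact adD_le_one hγ0 hγ1 q.2.1 q.2.2

lemma adCap_eq_ratSup {γ : ℝ} (hγ0 : 0 ≤ γ) (hγ1 : γ ≤ 1) : adCap γ = ratSup γ := by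
  haveI : Nonempty QI := ⟨⟨0, by norm_num⟩⟩
  haveI : Nonempty (Set.Icc (0:ℝ) 1) := ⟨⟨0, by norm_num⟩⟩
  rw [adCap_eq]
  apply le_antisymm
  · refine ciSup_le fun ξ => ?_
    obtain ⟨u, hu, hlim⟩ := mem_closure_iff_seq_limit.1 (Rat.denseRange_cast (ξ:ℝ))
    choose q hq using hu
    set r : ℕ → ℚ := fun n => max 0 (min 1 (q n)) with hr
    have hr0 : ∀ n, (0:ℝ) ≤ (r n : ℝ) := fun n => by
      have : (0:ℚ) ≤ r n := le_max_left _ _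
      exact_mod_cast this
    have hr1 : ∀ n, ((r n : ℝ)) ≤ 1 := fun n => by
      have : r n ≤ 1 := max_le (by norm_num) (min_le_left _ _)
      exact_mod_cast this
    have hcast : ∀ n, ((r n : ℝ)) = max 0 (min 1 (u n)) := by
      intro n
      rw [← hq n, hr]
      push_cast
      rfl
    have hrlim : Filter.Tendsto (fun n => ((r n : ℝ))) Filter.atTop (nhds (ξ:ℝ)) := by
      have h1 : Filter.Tendsto (fun n => max 0 (min 1 (u n))) Filter.atTop
          (nhds (max 0 (min 1 (ξ:ℝ)))) :=
        Filter.Tendsto.max tendsto_const_nhds (Filter.Tendsto.min tendsto_const_nhds hlim)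
      rw [min_eq_right ξ.2.2, max_eq_right ξ.2.1] at h1
      simpa [hcast] using h1
    have hD : Filter.Tendsto (fun n => adD γ ((r n : ℝ))) Filter.atTop (nhds (adD γ ξ)) :=
      ((adD_cont γ).tendsto (ξ:ℝ)).comp hrlim
    refine le_of_tendsto hD (Filter.Eventually.of_forall fun n => ?_)
    exact le_ciSup (ratSup_bdd hγ0 hγ1) ⟨r n, hr0 n, hr1 n⟩
  · refine ciSup_le fun q => ?_
    exact le_ciSup (adCap_bdd hγ0 hγ1) ⟨(q:ℝ), q.2⟩
lemma integrable_gauss_std : Integrable (fun u : ℝ => Real.exp (-u ^ 2 / 2)) := by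
  have h : (fun u : ℝ => Real.exp (-u ^ 2 / 2)) = fun u => Real.exp (-(1/2 : ℝ) * u ^ 2) := by
    funext u; congr 1; ring
  rw [h]
  exact integrable_exp_neg_mul_sq (by norm_num)

lemma gaussQ_lt_one (y : ℝ) : gaussQ y < 1 := by
  have hint := integrable_gauss_std
  have hc : 0 < Real.sqrt (2 * Real.pi) := Real.sqrt_pos.2 (by positivity)
  have htotal : (∫ u : ℝ, Real.exp (-u ^ 2 / 2)) = Real.sqrt (2 * Real.pi) := by
    have h : (fun u : ℝ => Real.exp (-u ^ 2 / 2)) = fun u => Real.exp (-(1/2 : ℝ) * u ^ 2) := by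
      funext u; congr 1; ring
    rw [h, integral_gaussian, show Real.pi / (1/2 : ℝ) = 2 * Real.pi by ring]
  have hsplit : (∫ u in Set.Iic y, Real.exp (-u ^ 2 / 2))
      + (∫ u in Set.Ioi y, Real.exp (-u ^ 2 / 2)) = ∫ u : ℝ, Real.exp (-u ^ 2 / 2) :=
    intervalIntegral.integral_Iic_add_Ioi hint.integrableOn hint.integrableOn
  have hpos : 0 < ∫ u in Set.Iic y, Real.exp (-u ^ 2 / 2) := by
    rw [setIntegral_pos_iff_support_of_nonneg_ae
      (Filter.Eventually.of_forall fun u => (Real.exp_pos _).le) hint.integrableOn]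
    have hsupp : Function.support (fun u : ℝ => Real.exp (-u ^ 2 / 2)) ∩ Set.Iic y
        = Set.Iic y := by
      apply Set.inter_eq_right.mpr
      intro u _
      exact Function.mem_support.2 (Real.exp_ne_zero _)
    rw [hsupp, Real.volume_Iic]
    exact ENNReal.zero_lt_top
  have hIoi : (∫ u in Set.Ioi y, Real.exp (-u ^ 2 / 2)) < Real.sqrt (2 * Real.pi) := by
    rw [← htotal, ← hsplit]; linarith
  unfold gaussQ
  rw [one_div]
  calc (Real.sqrt (2 * Real.pi))⁻¹ * ∫ u in Set.Ioi y, Real.exp (-u ^ 2 / 2)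
      < (Real.sqrt (2 * Real.pi))⁻¹ * Real.sqrt (2 * Real.pi) :=
        mul_lt_mul_of_pos_left hIoi (inv_pos.2 hc)
    _ = 1 := inv_mul_cancel₀ hc.ne'


/-- For any truncated Gaussian relaxation-time distribution (parameters
`μ ∈ ℝ`, `σ > 0`) and any cycle time `t_algo > 0`, the ergodic quantum capacity of the fast
time-varying amplitude damping channel, `∫₀^∞ g(1 - e^{-t_algo/x}) f(x) dx`, is strictly
positive. In particular (since no restriction is placed on `μ`) this holds even when the mean
damping probability `1 - e^{-t_algo/μ}` exceeds `1/2`, where the static amplitude damping channel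
at the mean relaxation time has zero quantum capacity. -/
theorem ergodic_capacity_FTVAD_pos (μ σ t_algo : ℝ) (hσ : 0 < σ) (ht : 0 < t_algo) :
    0 < ∫ x in Set.Ioi (0 : ℝ), adCap (1 - Real.exp (-t_algo / x)) * truncGaussPDF μ σ x := by
  haveI : Nonempty QI := ⟨⟨0, by norm_num⟩⟩
  have hcpos : 0 < Real.sqrt (2 * Real.pi) := Real.sqrt_pos.2 (by positivity)
  have hden : 0 < 1 - gaussQ (μ / σ) := by linarith [gaussQ_lt_one (μ / σ)]
  -- properties of γ(x) = 1 - exp (-t_algo / x)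
  have hγ01 : ∀ x : ℝ, x ∈ Set.Ioi (0:ℝ) →
      0 < 1 - Real.exp (-t_algo / x) ∧ 1 - Real.exp (-t_algo / x) < 1 := by
    intro x hx
    have hx0 : (0:ℝ) < x := hx
    have hneg : -t_algo / x < 0 := div_neg_of_neg_of_pos (by linarith) hx0
    constructor
    · have := Real.exp_lt_one_iff.2 hneg
      linarith
    · have := Real.exp_pos (-t_algo / x)
      linarith
  -- pdf properties
  have hpdf_nonneg : ∀ x : ℝ, 0 ≤ truncGaussPDF μ σ x := by
    intro x
    unfold truncGaussPDF
    split
    · apply div_nonneg _ hden.le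
      exact mul_nonneg (by positivity) (Real.exp_pos _).le
    · exact le_refl 0
  have hpdf_pos : ∀ x : ℝ, 0 ≤ x → 0 < truncGaussPDF μ σ x := by
    intro x hx
    unfold truncGaussPDF
    rw [if_pos hx]
    apply div_pos _ hden
    exact mul_pos (by positivity) (Real.exp_pos _)
  have hpdfm : Measurable (truncGaussPDF μ σ) := by
    unfold truncGaussPDF
    refine Measurable.ite (measurableSet_le measurable_const measurable_id) ?_ measurable_const
    exact ((((measurable_id.sub_const μ).pow_const 2).neg.div_const _).exp.const_mul _).div_const _
  -- integrability of the pdf on (0, ∞)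
  have hbase : Integrable (fun x : ℝ => Real.exp (-(x - μ) ^ 2 / (2 * σ ^ 2))) := by
    have hb : (0:ℝ) < (2 * σ ^ 2)⁻¹ := by positivity
    have h := (integrable_exp_neg_mul_sq hb).comp_sub_right μ
    have he : (fun x : ℝ => Real.exp (-(2 * σ ^ 2)⁻¹ * (x - μ) ^ 2))
        = fun x : ℝ => Real.exp (-(x - μ) ^ 2 / (2 * σ ^ 2)) := by
      funext x; congr 1; ring
    rwa [he] at h
  have hpdf_int : IntegrableOn (truncGaussPDF μ σ) (Set.Ioi (0:ℝ)) := by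
    have h2 : Integrable (fun x : ℝ =>
        (1 / (σ * Real.sqrt (2 * Real.pi))) * Real.exp (-(x - μ) ^ 2 / (2 * σ ^ 2))
          / (1 - gaussQ (μ / σ))) := (hbase.const_mul _).div_const _
    refine (h2.integrableOn).congr_fun ?_ measurableSet_Ioi
    intro x hx
    simp [truncGaussPDF, (le_of_lt (Set.mem_Ioi.1 hx))]
  -- measurability of the rational sup composed with γ
  have hγm : Measurable (fun x : ℝ => 1 - Real.exp (-t_algo / x)) :=
    measurable_const.sub ((measurable_const.div measurable_id).exp)
  have hSm : Measurable (fun x : ℝ => ratSup (1 - Real.exp (-t_algo / x))) := by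
    have : Measurable (fun x : ℝ => ⨆ q : QI, adD (1 - Real.exp (-t_algo / x)) (q : ℝ)) :=
      Measurable.iSup fun q => ((adD_cont' (q : ℝ)).measurable).comp hγm
    exact this
  -- bounds on the rational sup
  have hSb : ∀ x : ℝ, x ∈ Set.Ioi (0:ℝ) →
      0 ≤ ratSup (1 - Real.exp (-t_algo / x)) ∧ ratSup (1 - Real.exp (-t_algo / x)) ≤ 1 := by
    intro x hx
    obtain ⟨h0, h1⟩ := hγ01 x hx
    constructor
    · have := le_ciSup (ratSup_bdd h0.le h1.le) (⟨0, by norm_num⟩ : QI)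
      simpa [ratSup, adD_zero] using this
    · exact ciSup_le fun q => adD_le_one h0.le h1.le q.2.1 q.2.2
  -- integrability of the full integrand
  have hFm_int : IntegrableOn
      (fun x => ratSup (1 - Real.exp (-t_algo / x)) * truncGaussPDF μ σ x) (Set.Ioi (0:ℝ)) := by
    refine Integrable.mono hpdf_int ((hSm.mul hpdfm).aestronglyMeasurable) ?_
    filter_upwards [ae_restrict_mem measurableSet_Ioi] with x hx
    obtain ⟨h0, h1⟩ := hSb x hx
    rw [Real.norm_eq_abs, Real.norm_eq_abs,
      abs_of_nonneg (mul_nonneg h0 (hpdf_nonneg x)), abs_of_nonneg (hpdf_nonneg x)]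
    nlinarith [hpdf_nonneg x]
  have hF_int : IntegrableOn
      (fun x => adCap (1 - Real.exp (-t_algo / x)) * truncGaussPDF μ σ x) (Set.Ioi (0:ℝ)) := by
    refine hFm_int.congr ?_
    filter_upwards [ae_restrict_mem measurableSet_Ioi] with x hx
    obtain ⟨h0, h1⟩ := hγ01 x hx
    rw [adCap_eq_ratSup h0.le h1.le]
  -- a.e. nonnegativity
  have hF_nonneg : 0 ≤ᵐ[volume.restrict (Set.Ioi (0:ℝ))]
      fun x => adCap (1 - Real.exp (-t_algo / x)) * truncGaussPDF μ σ x := by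
    filter_upwards [ae_restrict_mem measurableSet_Ioi] with x hx
    obtain ⟨h0, h1⟩ := hγ01 x hx
    exact mul_nonneg (adCap_nonneg h0.le h1.le) (hpdf_nonneg x)
  rw [setIntegral_pos_iff_support_of_nonneg_ae hF_nonneg hF_int]
  -- the support contains (max 1 (t_algo / log 2), ∞)
  have hlog2 : 0 < Real.log 2 := Real.log_pos one_lt_two
  have hsub : Set.Ioi (max 1 (t_algo / Real.log 2)) ⊆
      Function.support (fun x => adCap (1 - Real.exp (-t_algo / x)) * truncGaussPDF μ σ x)
        ∩ Set.Ioi (0:ℝ) := by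
    intro x hx
    have hx1 : (1:ℝ) < x := lt_of_le_of_lt (le_max_left _ _) hx
    have hx0 : (0:ℝ) < x := by linarith
    have hxM : t_algo / Real.log 2 < x := lt_of_le_of_lt (le_max_right _ _) hx
    have hγlt : 1 - Real.exp (-t_algo / x) < 1/2 := by
      have h2 : (1:ℝ)/2 < Real.exp (-t_algo / x) := by
        have hta : t_algo / x < Real.log 2 := by
          rw [div_lt_iff₀ hx0]
          calc t_algo = (t_algo / Real.log 2) * Real.log 2 := by field_simp
            _ < x * Real.log 2 := mul_lt_mul_of_pos_right hxM hlog2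
            _ = Real.log 2 * x := mul_comm _ _
        have h3 : -Real.log 2 < -t_algo / x := by
          rw [neg_div]; linarith
        calc (1:ℝ)/2 = Real.exp (Real.log (1/2)) := by
              rw [Real.exp_log]; norm_num
          _ = Real.exp (-Real.log 2) := by
              rw [one_div, Real.log_inv]
          _ < _ := Real.exp_lt_exp.2 h3
      linarith
    have hγ0 : 0 < 1 - Real.exp (-t_algo / x) := (hγ01 x hx0).1
    refine ⟨Function.mem_support.2 (ne_of_gt ?_), hx0⟩
    exact mul_pos (adCap_pos hγ0 hγlt) (hpdf_pos x hx0.le)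
  calc (0:ENNReal) < volume (Set.Ioi (max 1 (t_algo / Real.log 2))) := by
        rw [Real.volume_Ioi]; exact ENNReal.zero_lt_top
    _ ≤ _ := measure_mono hsub
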